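/- Let P be a reversible ergodic Markov chain on a finite state space S with stationary distribution π, eigenvalues 1 = λ_1 ≥ λ_2 ≥ … ≥ λ_n ≥ −1. Suppose 1 + λ_n ≤ c(1 − λ_2) for some absolute constant c ∈ (0,1), and let f_n be a unit (in L²(π)) eigenfunction of λ_n. Then Var_π(|f_n|) ≤ (1 + λ_n)/(1 − λ_2). -/
import Mathlib

open Finset

variable {S : Type*}

/-- `t`-step transition probabilities. -/
def matPow [Fintype S] [DecidableEq S] (P : S → S → ℝ) : ℕ → S → S → ℝ
  | 0 => fun x y => if x = y then 1 else 0
  | t + 1 => fun x y => ∑ z, matPow P t x z * P z y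

/-- Variance of `f` with respect to `π`. -/
def variance [Fintype S] (π : S → ℝ) (f : S → ℝ) : ℝ :=
  ∑ x, (f x - ∑ y, π y * f y) ^ 2 * π x

/-- Rayleigh quotient `⟨Pf, f⟩_π / ⟨f, f⟩_π`. -/
noncomputable def rayleigh [Fintype S] (P : S → S → ℝ) (π : S → ℝ) (f : S → ℝ) : ℝ :=
  (∑ x, π x * f x * ∑ y, P x y * f y) / ∑ x, π x * (f x) ^ 2

/-- The second-largest eigenvalue `λ₂` of a reversible chain, via its variational
characterization. -/
noncomputable def lamTwo [Fintype S] (P : S → S → ℝ) (π : S → ℝ) : ℝ :=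
  sSup {r : ℝ | ∃ f : S → ℝ, (∃ x, f x ≠ 0) ∧ (∑ x, π x * f x = 0) ∧
    r = rayleigh P π f}

/-- The smallest eigenvalue `λ_n` of a reversible chain, via its variational
characterization. -/
noncomputable def lamMin [Fintype S] (P : S → S → ℝ) (π : S → ℝ) : ℝ :=
  sInf {r : ℝ | ∃ f : S → ℝ, (∃ x, f x ≠ 0) ∧ r = rayleigh P π f}

lemma matPow_nonneg [Fintype S] [DecidableEq S] (P : S → S → ℝ)
    (hP0 : ∀ x y, 0 ≤ P x y) : ∀ t x y, 0 ≤ matPow P t x y := by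
  intro t
  induction t with
  | zero => intro x y; simp only [matPow]; split <;> norm_num
  | succ t ih =>
    intro x y
    exact Finset.sum_nonneg fun z _ => mul_nonneg (ih x z) (hP0 z y)

lemma dsum_expand [Fintype S] (P : S → S → ℝ) (π : S → ℝ)
    (hP1 : ∀ x, ∑ y, P x y = 1)
    (hrev : ∀ x y, π x * P x y = π y * P y x)
    (f : S → ℝ) (ε : ℝ) :
    ∑ x, ∑ y, π x * P x y * (f x + ε * f y) ^ 2
      = (1 + ε ^ 2) * (∑ x, π x * f x ^ 2)
        + 2 * ε * (∑ x, π x * f x * ∑ y, P x y * f y) := by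
  have last : ∑ x, ∑ y, π x * P x y * f y ^ 2 = ∑ x, π x * f x ^ 2 := by
    rw [Finset.sum_comm]
    refine Finset.sum_congr rfl fun y _ => ?_
    calc ∑ x, π x * P x y * f y ^ 2 = ∑ x, P y x * (π y * f y ^ 2) := by
          refine Finset.sum_congr rfl fun x _ => ?_
          rw [hrev]; ring
      _ = π y * f y ^ 2 := by rw [← Finset.sum_mul, hP1, one_mul]
  have key : ∀ x, ∑ y, π x * P x y * (f x + ε * f y) ^ 2
      = π x * f x ^ 2 * (∑ y, P x y)
        + 2 * ε * (π x * f x * ∑ y, P x y * f y)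
        + ε ^ 2 * ∑ y, π x * P x y * f y ^ 2 := by
    intro x
    have h := Finset.sum_congr rfl fun y (_ : y ∈ Finset.univ) =>
      (by ring : π x * P x y * (f x + ε * f y) ^ 2
        = π x * f x ^ 2 * P x y + 2 * ε * (π x * f x * (P x y * f y))
          + ε ^ 2 * (π x * P x y * f y ^ 2))
    rw [h, Finset.sum_add_distrib, Finset.sum_add_distrib]
    simp only [← Finset.mul_sum]
  calc ∑ x, ∑ y, π x * P x y * (f x + ε * f y) ^ 2
      = ∑ x, (π x * f x ^ 2 * (∑ y, P x y)
        + 2 * ε * (π x * f x * ∑ y, P x y * f y)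
        + ε ^ 2 * ∑ y, π x * P x y * f y ^ 2) := Finset.sum_congr rfl fun x _ => key x
    _ = (∑ x, π x * f x ^ 2) + 2 * ε * (∑ x, π x * f x * ∑ y, P x y * f y)
        + ε ^ 2 * (∑ x, ∑ y, π x * P x y * f y ^ 2) := by
        rw [Finset.sum_add_distrib, Finset.sum_add_distrib, ← Finset.mul_sum, ← Finset.mul_sum]
        congr 1; congr 1
        refine Finset.sum_congr rfl fun x _ => by rw [hP1, mul_one]
    _ = (1 + ε ^ 2) * (∑ x, π x * f x ^ 2)
        + 2 * ε * (∑ x, π x * f x * ∑ y, P x y * f y) := by rw [last]; ring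

/-- let `P` be a reversible ergodic chain on a finite state space
with stationary distribution `π` and eigenvalues `1 = λ₁ ≥ λ₂ ≥ … ≥ λ_n ≥ −1`.
If `1 + λ_n ≤ c (1 − λ₂)` for some `c ∈ (0,1)`, and `f_n` is a unit (in `L²(π)`)
eigenfunction of `λ_n`, then `Var_π(|f_n|) ≤ (1 + λ_n)/(1 − λ₂)`. -/
theorem variance_abs_eigenfunction_bound
    [Fintype S] [DecidableEq S] [Nonempty S]
    (P : S → S → ℝ) (π : S → ℝ)
    (hP0 : ∀ x y, 0 ≤ P x y) (hP1 : ∀ x, ∑ y, P x y = 1)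
    (hrev : ∀ x y, π x * P x y = π y * P y x)
    (hπpos : ∀ x, 0 < π x) (hπ1 : ∑ x, π x = 1)
    (hergodic : ∀ x y : S, ∃ t : ℕ, ∀ s : ℕ, t ≤ s → 0 < matPow P s x y)
    (c : ℝ) (hc0 : 0 < c) (hc1 : c < 1)
    (hgap : 1 + lamMin P π ≤ c * (1 - lamTwo P π))
    (fn : S → ℝ)
    (hfn_eig : ∀ x, ∑ y, P x y * fn y = lamMin P π * fn x)
    (hfn_unit : ∑ x, π x * (fn x) ^ 2 = 1) :
    variance π (fun x => |fn x|) ≤ (1 + lamMin P π) / (1 - lamTwo P π) := by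
  set L := lamMin P π with hL
  set T := lamTwo P π with hT
  -- ⟨fn, P fn⟩ = L
  have hNfn : ∑ x, π x * fn x * ∑ y, P x y * fn y = L := by
    calc ∑ x, π x * fn x * ∑ y, P x y * fn y
        = ∑ x, L * (π x * fn x ^ 2) := by
          refine Finset.sum_congr rfl fun x _ => ?_
          rw [hfn_eig x]; ring
      _ = L * ∑ x, π x * fn x ^ 2 := by rw [← Finset.mul_sum]
      _ = L := by rw [hfn_unit, mul_one]
  -- double sum identity for fn
  have hD : ∑ x, ∑ y, π x * P x y * (fn x + 1 * fn y) ^ 2 = 2 + 2 * L := by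
    rw [dsum_expand P π hP1 hrev fn 1, hfn_unit, hNfn]; ring
  have hDnn : (0:ℝ) ≤ ∑ x, ∑ y, π x * P x y * (fn x + 1 * fn y) ^ 2 :=
    Finset.sum_nonneg fun x _ => Finset.sum_nonneg fun y _ =>
      mul_nonneg (mul_nonneg (hπpos x).le (hP0 x y)) (sq_nonneg _)
  have hLge : 0 ≤ 1 + L := by linarith [hD ▸ hDnn]
  -- boundedness of the lamTwo set
  have hbdd : BddAbove {r : ℝ | ∃ f : S → ℝ, (∃ x, f x ≠ 0) ∧ (∑ x, π x * f x = 0) ∧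
      r = rayleigh P π f} := by
    refine ⟨1, fun r hr => ?_⟩
    obtain ⟨f, ⟨x0, hx0⟩, -, rfl⟩ := hr
    have hS : 0 < ∑ x, π x * f x ^ 2 :=
      Finset.sum_pos' (fun i _ => mul_nonneg (hπpos i).le (sq_nonneg _))
        ⟨x0, Finset.mem_univ _, mul_pos (hπpos x0) (by positivity)⟩
    have hmain := dsum_expand P π hP1 hrev f (-1)
    have hnn : (0:ℝ) ≤ ∑ x, ∑ y, π x * P x y * (f x + (-1) * f y) ^ 2 :=
      Finset.sum_nonneg fun x _ => Finset.sum_nonneg fun y _ =>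
        mul_nonneg (mul_nonneg (hπpos x).le (hP0 x y)) (sq_nonneg _)
    have hN : (∑ x, π x * f x * ∑ y, P x y * f y) ≤ ∑ x, π x * f x ^ 2 := by nlinarith
    rw [rayleigh]
    exact (div_le_one hS).mpr hN
  by_cases hlt : T < 1
  · -- main case
    set m := ∑ y, π y * |fn y| with hm
    set g : S → ℝ := fun x => |fn x| - m with hg
    have hVar : variance π (fun x => |fn x|) = ∑ x, π x * g x ^ 2 := by
      rw [variance]
      exact Finset.sum_congr rfl fun x _ => by simp only [hg]; ring
    have hmean0 : ∑ x, π x * g x = 0 := by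
      simp only [hg, mul_sub]
      rw [Finset.sum_sub_distrib, ← Finset.sum_mul, hπ1, one_mul]
      simp [hm]
    by_cases hzero : ∀ x, g x = 0
    · rw [hVar]
      have : ∑ x, π x * g x ^ 2 = 0 :=
        Finset.sum_eq_zero fun x _ => by rw [hzero x]; ring
      rw [this]
      exact div_nonneg hLge (by linarith)
    · push_neg at hzero
      obtain ⟨x1, hx1⟩ := hzero
      have hV : 0 < ∑ x, π x * g x ^ 2 :=
        Finset.sum_pos' (fun i _ => mul_nonneg (hπpos i).le (sq_nonneg _))
          ⟨x1, Finset.mem_univ _, mul_pos (hπpos x1) (by positivity)⟩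
      have hmem : rayleigh P π g ∈ {r : ℝ | ∃ f : S → ℝ, (∃ x, f x ≠ 0) ∧
          (∑ x, π x * f x = 0) ∧ r = rayleigh P π f} := ⟨g, ⟨x1, hx1⟩, hmean0, rfl⟩
      have hray_le : rayleigh P π g ≤ T := le_csSup hbdd hmem
      rw [rayleigh] at hray_le
      have hNle : (∑ x, π x * g x * ∑ y, P x y * g y) ≤ T * ∑ x, π x * g x ^ 2 :=
        (div_le_iff₀ hV).mp hray_le
      have hDg := dsum_expand P π hP1 hrev g (-1)
      have hcomp : ∑ x, ∑ y, π x * P x y * (g x + (-1) * g y) ^ 2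
          ≤ ∑ x, ∑ y, π x * P x y * (fn x + 1 * fn y) ^ 2 := by
        refine Finset.sum_le_sum fun x _ => Finset.sum_le_sum fun y _ => ?_
        refine mul_le_mul_of_nonneg_left ?_ (mul_nonneg (hπpos x).le (hP0 x y))
        have h1 : g x + (-1) * g y = |fn x| - |fn y| := by simp only [hg]; ring
        rw [h1]
        nlinarith [sq_abs (fn x), sq_abs (fn y), abs_mul (fn x) (fn y),
          neg_abs_le (fn x * fn y), abs_nonneg (fn x * fn y)]
      have hfinal : (∑ x, π x * g x ^ 2) * (1 - T) ≤ 1 + L := by nlinarith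
      rw [hVar, le_div_iff₀ (by linarith : (0:ℝ) < 1 - T)]
      exact hfinal
  · -- degenerate case: T ≥ 1 forces 1 + L = 0 and |fn| constant
    push_neg at hlt
    have hTle : 1 - T ≤ 0 := by linarith
    have hL0 : 1 + L = 0 :=
      le_antisymm (hgap.trans (mul_nonpos_of_nonneg_of_nonpos hc0.le hTle)) hLge
    have hDz : ∑ x, ∑ y, π x * P x y * (fn x + 1 * fn y) ^ 2 = 0 := by
      rw [hD]; linarith
    have hterm : ∀ x y, π x * P x y * (fn x + 1 * fn y) ^ 2 = 0 := by
      intro x y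
      have h1 := (Finset.sum_eq_zero_iff_of_nonneg fun x _ =>
        Finset.sum_nonneg fun y _ =>
          mul_nonneg (mul_nonneg (hπpos x).le (hP0 x y)) (sq_nonneg _)).mp hDz x
        (Finset.mem_univ x)
      exact (Finset.sum_eq_zero_iff_of_nonneg fun y _ =>
        mul_nonneg (mul_nonneg (hπpos x).le (hP0 x y)) (sq_nonneg _)).mp h1 y
        (Finset.mem_univ y)
    have habs : ∀ x y, 0 < P x y → |fn x| = |fn y| := by
      intro x y hPxy
      have h := hterm x y
      have h2 : (fn x + 1 * fn y) ^ 2 = 0 := by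
        have hpos : 0 < π x * P x y := mul_pos (hπpos x) hPxy
        by_contra hne
        exact (mul_ne_zero hpos.ne' hne) h
      have h3 : fn y = -fn x := by nlinarith [sq_nonneg (fn x + fn y)]
      rw [h3, abs_neg]
    have hstep : ∀ t x y, 0 < matPow P t x y → |fn x| = |fn y| := by
      intro t
      induction t with
      | zero =>
        intro x y h
        simp only [matPow] at h
        by_cases hxy : x = y
        · rw [hxy]
        · simp [hxy] at h
      | succ t ih =>
        intro x y h
        simp only [matPow] at h
        have : ∃ z ∈ Finset.univ (α := S), 0 < matPow P t x z * P z y := by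
          by_contra hc
          push_neg at hc
          have : ∑ z, matPow P t x z * P z y ≤ 0 :=
            Finset.sum_nonpos fun z hz => hc z hz
          linarith
        obtain ⟨z, -, hz⟩ := this
        have h1 : 0 < matPow P t x z := by
          rcases lt_or_eq_of_le (matPow_nonneg P hP0 t x z) with h | h
          · exact h
          · exfalso; rw [← h, zero_mul] at hz; exact lt_irrefl 0 hz
        have h2 : 0 < P z y := by
          rcases lt_or_eq_of_le (hP0 z y) with h | h
          · exact h
          · exfalso; rw [← h, mul_zero] at hz; exact lt_irrefl 0 hz
        exact (ih x z h1).trans (habs z y h2)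
    have hconst : ∀ x y : S, |fn x| = |fn y| := by
      intro x y
      obtain ⟨t, ht⟩ := hergodic x y
      exact hstep t x y (ht t le_rfl)
    obtain ⟨x0⟩ := (inferInstance : Nonempty S)
    have hmeanc : ∑ y, π y * |fn y| = |fn x0| := by
      calc ∑ y, π y * |fn y| = ∑ y, π y * |fn x0| := by
            exact Finset.sum_congr rfl fun y _ => by rw [hconst y x0]
        _ = (∑ y, π y) * |fn x0| := by rw [Finset.sum_mul]
        _ = |fn x0| := by rw [hπ1, one_mul]
    have hvar0 : variance π (fun x => |fn x|) = 0 := by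
      rw [variance]
      refine Finset.sum_eq_zero fun x _ => ?_
      rw [hmeanc, hconst x x0]
      ring
    rw [hvar0, hL0, zero_div]
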